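/- (Doubling identity for the Barnes G-function.) For every x ∈ ℂ: G(1+2x)·G(1/2)² = 2^{x(2x−1)}·π^{−x−1/2}·G(1/2+x)·G(1+x)²·G(3/2+x), where 2^{x(2x−1)} = exp(x(2x−1)·log 2) and π^{−x−1/2} = exp(−(x+1/2)·log π). -/

import Mathlib

open Complex Real

/-- The Barnes G-function, defined by the everywhere-convergent Weierstrass product
`G(1+z) = (2π)^{z/2}·exp(−(z+z²(1+γ))/2)·∏_{n≥1} (1+z/n)ⁿ·exp(z²/(2n) − z)`. -/
noncomputable def barnesG (w : ℂ) : ℂ :=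
  (2 * (π : ℂ)) ^ ((w - 1) / 2) *
    Complex.exp (-((w - 1) + (w - 1) ^ 2 * (1 + (Real.eulerMascheroniConstant : ℂ))) / 2) *
    ∏' n : ℕ, ((1 + (w - 1) / ((n : ℂ) + 1)) ^ (n + 1) *
      Complex.exp ((w - 1) ^ 2 / (2 * ((n : ℂ) + 1)) - (w - 1)))

/-!
Write `G(1 + z) = exp (ℓ z) · P z`, where `P` is the Weierstrass product. Its `N`-th partial
product is `H_N(z) / H_N(0) · exp (z² h_N / 2 - z N)`, with the shifted hyperfactorial
`H_N(z) = ∏_{k ≤ N} (k + z)^k` and the harmonic number `h_N`. Sorting the factors of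
`H_{2N}(2x)` by parity gives the exact identity
`H_{2N}(2x) (N + x + 1/2)^N = 2^(2N² + N) H_N(x)² H_N(x - 1/2) H_N(x + 1/2)`,
so the doubling relation holds for partial products up to the constant
`(2N)! e^N / (4^N N! N^N) → √2` (Stirling), the factor `exp (2x² (h_{2N} - h_N)) → 2^(2x²)`,
and `(1 + (x + 1/2)/N)^N → e^(x + 1/2)`. The prefactors `exp (ℓ z)` supply the powers of `2`
and `π`.
-/

open Filter Finset Topology

lemma tendsto_harmonic_two_mul_sub :
    Tendsto (fun N : ℕ => (harmonic (2 * N) : ℝ) - harmonic N) atTop (𝓝 (Real.log 2)) := by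
  have h := ((Real.tendsto_harmonic_sub_log.comp (tendsto_id.const_mul_atTop' two_pos)).sub
    Real.tendsto_harmonic_sub_log).add_const (Real.log 2)
  rw [sub_self, zero_add] at h
  refine h.congr' ?_
  filter_upwards [eventually_ne_atTop 0] with N hN
  simp only [Function.comp_apply, id, Nat.cast_mul, Nat.cast_ofNat]
  rw [Real.log_mul two_ne_zero (Nat.cast_ne_zero.mpr hN)]
  ring

namespace BarnesG

noncomputable def doublingConst (N : ℕ) : ℝ :=
  (2 * N).factorial * Real.exp N / (2 ^ (2 * N) * N.factorial * (N : ℝ) ^ N)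

lemma doublingConst_eq_stirlingSeq {N : ℕ} (hN : N ≠ 0) :
    doublingConst N = √2 * Stirling.stirlingSeq (2 * N) / Stirling.stirlingSeq N := by
  have h2N : √(2 * ((2 * N : ℕ) : ℝ)) = √2 * √2 * √N := by
    rw [Nat.cast_mul, Nat.cast_ofNat, ← mul_assoc, Real.sqrt_mul (by positivity),
      Real.sqrt_mul (by positivity)]
  have hexp : Real.exp N = Real.exp 1 ^ N := by rw [← Real.exp_nat_mul, mul_one]
  simp only [doublingConst, Stirling.stirlingSeq, h2N, Real.sqrt_mul zero_le_two (N : ℝ), div_pow,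
    hexp]
  push_cast
  field_simp
  ring

lemma tendsto_doublingConst : Tendsto doublingConst atTop (𝓝 √2) := by
  have hπ : √π ≠ 0 := by positivity
  have h := ((Stirling.tendsto_stirlingSeq_sqrt_pi.comp (tendsto_id.const_mul_atTop' two_pos)).div
    Stirling.tendsto_stirlingSeq_sqrt_pi hπ).const_mul √2
  rw [div_self hπ, mul_one] at h
  refine h.congr' ?_
  filter_upwards [eventually_ne_atTop 0] with N hN
  rw [doublingConst_eq_stirlingSeq hN, mul_div_assoc]
  rfl

noncomputable def weierstrassFactor (z : ℂ) (n : ℕ) : ℂ :=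
  (1 + z / ((n : ℂ) + 1)) ^ (n + 1) * Complex.exp (z ^ 2 / (2 * ((n : ℂ) + 1)) - z)

noncomputable def weierstrassProd (z : ℂ) : ℂ := ∏' n : ℕ, weierstrassFactor z n

noncomputable def partialProd (z : ℂ) (N : ℕ) : ℂ := ∏ n ∈ range N, weierstrassFactor z n

lemma weierstrassFactor_eq_exp {z : ℂ} {n : ℕ} (hz : ‖z / ((n : ℂ) + 1)‖ < 1) :
    weierstrassFactor z n = Complex.exp (((n : ℂ) + 1) *
      (Complex.log (1 + z / ((n : ℂ) + 1)) - logTaylor 3 (z / ((n : ℂ) + 1)))) := by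
  have h1w : 1 + z / ((n : ℂ) + 1) ≠ 0 := by
    intro h
    rw [add_eq_zero_iff_eq_neg'.mp h] at hz
    simp at hz
  have hpow : (1 + z / ((n : ℂ) + 1)) ^ (n + 1) =
      Complex.exp (((n : ℂ) + 1) * Complex.log (1 + z / ((n : ℂ) + 1))) := by
    have h := Complex.exp_nat_mul (Complex.log (1 + z / ((n : ℂ) + 1))) (n + 1)
    rw [Complex.exp_log h1w, Nat.cast_add_one] at h
    exact h.symm
  rw [weierstrassFactor, hpow, ← Complex.exp_add]
  congr 1
  simp only [logTaylor, Finset.sum_range_succ]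
  field_simp
  ring

lemma norm_weierstrassFactor_sub_one_le {z : ℂ} {n : ℕ} (hz : 4 * ‖z‖ ≤ n + 1)
    (hz3 : ‖z‖ ^ 3 ≤ (n + 1) ^ 2) :
    ‖weierstrassFactor z n - 1‖ ≤ ‖z‖ ^ 3 / (n + 1) ^ 2 := by
  have hn : (0 : ℝ) < n + 1 := by positivity
  set w := z / ((n : ℂ) + 1)
  have hw : ‖w‖ = ‖z‖ / (n + 1) := by
    rw [norm_div, ← Nat.cast_add_one, Complex.norm_natCast, Nat.cast_add_one]
  have hw4 : ‖w‖ ≤ 1 / 4 := by rw [hw, div_le_iff₀ hn]; linarith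
  have hlog : ‖Complex.log (1 + w) - logTaylor 3 w‖ ≤ ‖w‖ ^ 3 / 2 := by
    have hinv : (1 - ‖w‖)⁻¹ ≤ 4 / 3 := by
      rw [inv_le_comm₀ (by linarith) (by norm_num)]; linarith
    calc _ ≤ ‖w‖ ^ 3 * (1 - ‖w‖)⁻¹ / 3 := by
          have h := Complex.norm_log_sub_logTaylor_le 2 (hw4.trans_lt (by norm_num))
          norm_num at h
          exact h
      _ ≤ ‖w‖ ^ 3 * (4 / 3) / 3 := by gcongr
      _ ≤ ‖w‖ ^ 3 / 2 := by linarith [pow_nonneg (norm_nonneg w) 3]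
  set u := ((n : ℂ) + 1) * (Complex.log (1 + w) - logTaylor 3 w)
  have hu : ‖u‖ ≤ ‖z‖ ^ 3 / (2 * (n + 1) ^ 2) := by
    rw [norm_mul, ← Nat.cast_add_one, Complex.norm_natCast, Nat.cast_add_one]
    calc _ ≤ (n + 1) * (‖w‖ ^ 3 / 2) := by gcongr
      _ = ‖z‖ ^ 3 / (2 * (n + 1) ^ 2) := by rw [hw]; field_simp
  rw [weierstrassFactor_eq_exp (hw4.trans_lt (by norm_num))]
  calc _ ≤ 2 * ‖u‖ :=
        Complex.norm_exp_sub_one_le (hu.trans (by rw [div_le_one (by positivity)]; nlinarith))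
    _ ≤ 2 * (‖z‖ ^ 3 / (2 * (n + 1) ^ 2)) := by gcongr
    _ = ‖z‖ ^ 3 / (n + 1) ^ 2 := by field_simp

lemma multipliable_weierstrassFactor (z : ℂ) : Multipliable (weierstrassFactor z) := by
  have hsum : Summable fun n : ℕ => ‖z‖ ^ 3 / ((n : ℝ) + 1) ^ 2 := by
    have h := (summable_nat_add_iff 1).mpr (Real.summable_one_div_nat_pow.mpr one_lt_two)
    simpa [div_eq_mul_inv] using h.mul_left (‖z‖ ^ 3)
  have hbound : ∀ᶠ n : ℕ in cofinite,
      ‖‖weierstrassFactor z n - 1‖‖ ≤ ‖z‖ ^ 3 / ((n : ℝ) + 1) ^ 2 := by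
    have h := tendsto_natCast_atTop_atTop (R := ℝ)
    rw [Nat.cofinite_eq_atTop]
    filter_upwards [h.eventually_ge_atTop (4 * ‖z‖), h.eventually_ge_atTop (‖z‖ ^ 3)]
      with n hn hn3
    rw [norm_norm]
    exact norm_weierstrassFactor_sub_one_le (by linarith) (by nlinarith [norm_nonneg z])
  simpa using multipliable_one_add_of_summable (hsum.of_norm_bounded_eventually hbound)

lemma tendsto_partialProd (z : ℂ) : Tendsto (partialProd z) atTop (𝓝 (weierstrassProd z)) :=
  (multipliable_weierstrassFactor z).hasProd.tendsto_prod_nat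

noncomputable def hyperfac (z : ℂ) (N : ℕ) : ℂ :=
  ∏ k ∈ range N, ((k : ℂ) + 1 + z) ^ (k + 1)

lemma hyperfac_zero_ne_zero (N : ℕ) : hyperfac 0 N ≠ 0 :=
  prod_ne_zero_iff.mpr fun k _ => pow_ne_zero _ (by simpa using Nat.cast_add_one_ne_zero k)

lemma partialProd_eq (z : ℂ) (N : ℕ) :
    partialProd z N =
      hyperfac z N / hyperfac 0 N * Complex.exp (z ^ 2 / 2 * harmonic N - z * N) := by
  have hsum : z ^ 2 / 2 * harmonic N - z * N =
      ∑ n ∈ range N, (z ^ 2 / (2 * ((n : ℂ) + 1)) - z) := by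
    simp only [harmonic]
    push_cast
    rw [mul_sum, sum_sub_distrib, sum_const, card_range, nsmul_eq_mul, mul_comm z]
    congr 1
    refine sum_congr rfl fun n _ => ?_
    field_simp
  rw [hsum, Complex.exp_sum, partialProd, hyperfac, hyperfac, ← prod_div_distrib,
    ← prod_mul_distrib]
  refine prod_congr rfl fun n _ => ?_
  rw [weierstrassFactor, add_zero, ← div_pow]
  congr 2
  field_simp

lemma hyperfac_two_mul (x : ℂ) (N : ℕ) :
    hyperfac (2 * x) (2 * N) * ((N : ℂ) + x + 1 / 2) ^ N =
      2 ^ (2 * N ^ 2 + N) * hyperfac x N ^ 2 * hyperfac (x - 1 / 2) N *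
        hyperfac (x + 1 / 2) N := by
  induction N with
  | zero => simp [hyperfac]
  | succ N ih =>
    rw [show 2 * (N + 1) = 2 * N + 1 + 1 by ring]
    simp only [hyperfac, prod_range_succ] at ih ⊢
    push_cast
    rw [show (2 * N + 1 + 2 * x : ℂ) = 2 * (N + x + 1 / 2) by ring,
      show (2 * N + 1 + 1 + 2 * x : ℂ) = 2 * (N + 1 + x) by ring,
      show (N + 1 + (x - 1 / 2) : ℂ) = N + x + 1 / 2 by ring,
      show (N + 1 + (x + 1 / 2) : ℂ) = N + 1 + x + 1 / 2 by ring, mul_pow (2 : ℂ),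
      mul_pow (2 : ℂ)]
    linear_combination (2 ^ (4 * N + 3) * ((N : ℂ) + x + 1 / 2) ^ (N + 1) *
      ((N : ℂ) + 1 + x) ^ (2 * N + 2) * ((N : ℂ) + 1 + x + 1 / 2) ^ (N + 1)) * ih

lemma hyperfac_neg_half (N : ℕ) :
    2 ^ (2 * N ^ 2 + 3 * N) * N.factorial * hyperfac (-1 / 2) N ^ 2 * hyperfac 0 N ^ 2 =
      hyperfac 0 (2 * N) * (2 * N).factorial := by
  induction N with
  | zero => simp [hyperfac]
  | succ N ih =>
    rw [show 2 * (N + 1) = 2 * N + 1 + 1 by ring]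
    simp only [hyperfac, prod_range_succ, Nat.factorial_succ] at ih ⊢
    push_cast
    rw [show (2 * N + 1 + 0 : ℂ) = 2 * (N + 1 + -1 / 2) by ring,
      show (2 * N + 1 + 1 + 0 : ℂ) = 2 * (N + 1 + 0) by ring, mul_pow (2 : ℂ),
      mul_pow (2 : ℂ)]
    linear_combination (2 ^ (4 * N + 5) * ((N : ℂ) + 1) * ((N : ℂ) + 1 + -1 / 2) ^ (2 * N + 2) *
      ((N : ℂ) + 1 + 0) ^ (2 * N + 2)) * ih

lemma hyperfac_div_doubling (x : ℂ) {N : ℕ} (hN : N ≠ 0) :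
    hyperfac (2 * x) (2 * N) / hyperfac 0 (2 * N) * (hyperfac (-1 / 2) N / hyperfac 0 N) ^ 2 *
        (1 + (x + 1 / 2) / N) ^ N =
      (2 * N).factorial / (2 ^ (2 * N) * N.factorial * (N : ℂ) ^ N) *
        (hyperfac (x - 1 / 2) N / hyperfac 0 N * (hyperfac x N / hyperfac 0 N) ^ 2 *
          (hyperfac (x + 1 / 2) N / hyperfac 0 N)) := by
  have hN' : (N : ℂ) ≠ 0 := Nat.cast_ne_zero.mpr hN
  have hM : (N : ℂ) ^ N ≠ 0 := pow_ne_zero N hN'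
  have h0 := hyperfac_zero_ne_zero N
  have h0' := hyperfac_zero_ne_zero (2 * N)
  have hf : (N.factorial : ℂ) ≠ 0 := Nat.cast_ne_zero.mpr N.factorial_ne_zero
  have hC := hyperfac_two_mul x N
  have hK := hyperfac_neg_half N
  rw [one_add_div hN', ← add_assoc, div_pow ((N : ℂ) + x + 1 / 2)]
  -- Opaque names stop `field_simp` from rewriting the arguments of `hyperfac` and from
  -- recombining `a ^ N / N ^ N` into `(a / N) ^ N`.
  generalize (N : ℂ) ^ N = M at hM ⊢
  generalize hyperfac (2 * x) (2 * N) = A at hC ⊢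
  generalize hyperfac x N = B at hC ⊢
  generalize hyperfac (x - 1 / 2) N = C at hC ⊢
  generalize hyperfac (x + 1 / 2) N = D at hC ⊢
  generalize hyperfac (-1 / 2) N = E at hK ⊢
  generalize hyperfac 0 N = F at h0 hK ⊢
  generalize hyperfac 0 (2 * N) = F₂ at h0' hK ⊢
  field_simp
  linear_combination (2 ^ (2 * N) * N.factorial * E ^ 2 * F ^ 2 : ℂ) * hC + B ^ 2 * C * D * hK

lemma partialProd_doubling (x : ℂ) {N : ℕ} (hN : N ≠ 0) :
    partialProd (2 * x) (2 * N) * partialProd (-1 / 2) N ^ 2 * (1 + (x + 1 / 2) / N) ^ N =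
      doublingConst N * Complex.exp (2 * x ^ 2 * (harmonic (2 * N) - harmonic N)) *
        (partialProd (x - 1 / 2) N * partialProd x N ^ 2 * partialProd (x + 1 / 2) N) := by
  have hE : Complex.exp ((2 * x) ^ 2 / 2 * harmonic (2 * N) - 2 * x * (2 * N : ℕ)) *
        Complex.exp ((-1 / 2) ^ 2 / 2 * harmonic N - -1 / 2 * N) ^ 2 =
      Complex.exp N * Complex.exp (2 * x ^ 2 * (harmonic (2 * N) - harmonic N)) *
        (Complex.exp ((x - 1 / 2) ^ 2 / 2 * harmonic N - (x - 1 / 2) * N) *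
          Complex.exp (x ^ 2 / 2 * harmonic N - x * N) ^ 2 *
          Complex.exp ((x + 1 / 2) ^ 2 / 2 * harmonic N - (x + 1 / 2) * N)) := by
    simp only [← Complex.exp_nat_mul, ← Complex.exp_add]
    congr 1
    push_cast
    ring
  have hc : (doublingConst N : ℂ) =
      (2 * N).factorial / (2 ^ (2 * N) * N.factorial * (N : ℂ) ^ N) * Complex.exp N := by
    rw [doublingConst]
    push_cast
    ring
  simp only [partialProd_eq, hc]
  linear_combination (Complex.exp ((2 * x) ^ 2 / 2 * harmonic (2 * N) - 2 * x * (2 * N : ℕ)) *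
      Complex.exp ((-1 / 2) ^ 2 / 2 * harmonic N - -1 / 2 * N) ^ 2) * hyperfac_div_doubling x hN +
    ((2 * N).factorial / (2 ^ (2 * N) * N.factorial * (N : ℂ) ^ N) *
        (hyperfac (x - 1 / 2) N / hyperfac 0 N * (hyperfac x N / hyperfac 0 N) ^ 2 *
          (hyperfac (x + 1 / 2) N / hyperfac 0 N))) * hE

lemma weierstrassProd_doubling (x : ℂ) :
    weierstrassProd (2 * x) * weierstrassProd (-1 / 2) ^ 2 * Complex.exp (x + 1 / 2) =
      √2 * Complex.exp (2 * x ^ 2 * Real.log 2) *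
        (weierstrassProd (x - 1 / 2) * weierstrassProd x ^ 2 * weierstrassProd (x + 1 / 2)) := by
  have hL := (((tendsto_partialProd (2 * x)).comp (tendsto_id.const_mul_atTop' two_pos)).mul
    ((tendsto_partialProd (-1 / 2)).pow 2)).mul (Complex.tendsto_one_add_div_pow_exp (x + 1 / 2))
  have hH : Tendsto (fun N : ℕ => Complex.exp (2 * x ^ 2 * (harmonic (2 * N) - harmonic N)))
      atTop (𝓝 (Complex.exp (2 * x ^ 2 * Real.log 2))) := by
    have h := (Complex.continuous_ofReal.tendsto _).comp tendsto_harmonic_two_mul_sub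
    refine ((h.const_mul (2 * x ^ 2)).cexp).congr fun N => ?_
    simp
  have hR := (((Complex.continuous_ofReal.tendsto _).comp tendsto_doublingConst).mul hH).mul
    (((tendsto_partialProd (x - 1 / 2)).mul ((tendsto_partialProd x).pow 2)).mul
      (tendsto_partialProd (x + 1 / 2)))
  refine tendsto_nhds_unique (hL.congr' ?_) hR
  filter_upwards [eventually_ne_atTop 0] with N hN
  exact partialProd_doubling x hN

noncomputable def logPrefactor (z : ℂ) : ℂ :=
  z / 2 * Real.log (2 * π) - (z + z ^ 2 * (1 + Real.eulerMascheroniConstant)) / 2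

lemma barnesG_one_add (z : ℂ) :
    barnesG (1 + z) = Complex.exp (logPrefactor z) * weierstrassProd z := by
  have h2π : (2 * π : ℂ) = ((2 * π : ℝ) : ℂ) := by push_cast; rfl
  rw [barnesG, add_sub_cancel_left, h2π,
    Complex.cpow_def_of_ne_zero (by exact_mod_cast two_pi_pos.ne'),
    ← Complex.ofReal_log two_pi_pos.le, ← Complex.exp_add, logPrefactor, weierstrassProd]
  congr 2
  ring

end BarnesG

open BarnesG in
/-- doubling identity for the Barnes G-function:
`G(1+2x)·G(1/2)² = 2^{x(2x−1)}·π^{−x−1/2}·G(1/2+x)·G(1+x)²·G(3/2+x)`. -/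
theorem barnesG_doubling (x : ℂ) :
    barnesG (1 + 2 * x) * barnesG (1 / 2) ^ 2 =
      Complex.exp (x * (2 * x - 1) * (Real.log 2 : ℂ)) *
      Complex.exp (-(x + 1 / 2) * (Real.log π : ℂ)) *
      barnesG (1 / 2 + x) * barnesG (1 + x) ^ 2 * barnesG (3 / 2 + x) := by
  have hexp : Complex.exp (logPrefactor (2 * x)) * Complex.exp (logPrefactor (-1 / 2)) ^ 2 *
        (√2 * Complex.exp (2 * x ^ 2 * Real.log 2)) =
      Complex.exp (x * (2 * x - 1) * Real.log 2) * Complex.exp (-(x + 1 / 2) * Real.log π) *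
        Complex.exp (logPrefactor (x - 1 / 2)) * Complex.exp (logPrefactor x) ^ 2 *
        Complex.exp (logPrefactor (x + 1 / 2)) * Complex.exp (x + 1 / 2) := by
    rw [← Real.exp_log (Real.sqrt_pos.mpr two_pos), Real.log_sqrt zero_le_two, Complex.ofReal_exp]
    simp only [logPrefactor, Real.log_mul two_ne_zero pi_ne_zero, ← Complex.exp_nat_mul,
      ← Complex.exp_add]
    congr 1
    push_cast
    ring
  rw [show barnesG (1 / 2) = barnesG (1 + -1 / 2) by norm_num,
    show (1 / 2 + x : ℂ) = 1 + (x - 1 / 2) by ring,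
    show (3 / 2 + x : ℂ) = 1 + (x + 1 / 2) by ring]
  simp only [barnesG_one_add]
  apply mul_right_cancel₀ (Complex.exp_ne_zero (x + 1 / 2))
  linear_combination
    (Complex.exp (logPrefactor (2 * x)) * Complex.exp (logPrefactor (-1 / 2)) ^ 2) *
      weierstrassProd_doubling x +
    (weierstrassProd (x - 1 / 2) * weierstrassProd x ^ 2 * weierstrassProd (x + 1 / 2)) * hexp
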